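/- arXiv:2008.11051 — 4 statements merged into one kernel-verified Lean document; each statement's English description precedes it below -/
import Mathlib

section
/- Let G be an m×m matrix satisfying G = Σ_{ℓ=−1}^q A_ℓ(G) G^{ℓ+1}, and set B_i^* = Σ_{j=i}^q A_j(G) G^{j−i} for i = 0,…,q. Then the following identity of polynomials with m×m matrix coefficients holds: z·I − Σ_{i=−1}^q A_i(G) z^{i+1} = (I − Σ_{i=0}^q B_i^* zⁱ)(z·I − G); equivalently, S_q(z) = U_q(z)(I − z⁻¹G) for all z ≠ 0, where S_q(z) = I − Σ_{i=−1}^q A_i(G) zⁱ and U_q(z) = I − Σ_{i=0}^q B_i^* zⁱ. -/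
/-!
Dividing the matrix polynomial `∑ A_ℓ(G) z^{ℓ+1}` on the right by `z I - G` leaves the quotient
`∑ B_i^* zⁱ` and the right remainder `∑ A_ℓ(G) G^{ℓ+1}`, which equals `G` by the fixed-point equation
for `G`; the `z I` term then combines with the remainder `G` into `I · (z I - G)`.
Dividing by `z` gives the second factorization.
-/

open Matrix

/-- `A_ℓ(G) = ∑_{i=0}^∞ A_{ℓ,i} Gⁱ`, in shifted index `ℓ' = ℓ+1`. -/
noncomputable def AfG {m : ℕ} (Aℓ : ℕ → ℕ → Matrix (Fin m) (Fin m) ℝ)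
    (G : Matrix (Fin m) (Fin m) ℝ) (ℓ : ℕ) : Matrix (Fin m) (Fin m) ℝ :=
  ∑' i, Aℓ ℓ i * G ^ i

/-- `B_i^* = ∑_{j=i}^q A_j(G) G^{j-i}`, `i = 0,…,q`, with `p = q+1` and shifted
index `j' = j+1 ∈ {i+1,…,p}`. -/
noncomputable def Bstar {m : ℕ} (p : ℕ) (Aℓ : ℕ → ℕ → Matrix (Fin m) (Fin m) ℝ)
    (G : Matrix (Fin m) (Fin m) ℝ) (i : ℕ) : Matrix (Fin m) (Fin m) ℝ :=
  ∑ t ∈ Finset.range (p - i), AfG Aℓ G (i + 1 + t) * G ^ t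

open Finset

theorem sum_pow_smul_sub_sum_mul_pow_eq_mul_sub {K R : Type*} [CommSemiring K] [Ring R]
    [Algebra K R] (C : ℕ → R) (G : R) (z : K) (n : ℕ) :
    ∑ ℓ ∈ range (n + 1), z ^ ℓ • C ℓ - ∑ ℓ ∈ range (n + 1), C ℓ * G ^ ℓ =
      (∑ i ∈ range n, z ^ i • ∑ t ∈ range (n - i), C (i + 1 + t) * G ^ t) * (z • 1 - G) := by
  induction n generalizing C with
  | zero => simp
  | succ n ih =>
    set B₀ := ∑ t ∈ range (n + 1), C (t + 1) * G ^ t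
    have hquot : ∑ i ∈ range (n + 1), z ^ i • ∑ t ∈ range (n + 1 - i), C (i + 1 + t) * G ^ t =
        z • ∑ i ∈ range n, z ^ i • ∑ t ∈ range (n - i), C (i + 1 + t + 1) * G ^ t + B₀ := by
      rw [sum_range_succ']
      simp only [smul_sum, smul_smul, pow_succ', Nat.add_sub_add_right, pow_zero, one_smul,
        Nat.sub_zero, zero_add, B₀]
      congr 1
      · refine sum_congr rfl fun i _ => sum_congr rfl fun t _ => ?_
        rw [show i + 1 + 1 + t = i + 1 + t + 1 by omega]
      · simp only [add_comm 1]
    have hB₀ : B₀ * G = ∑ ℓ ∈ range (n + 1), C (ℓ + 1) * G ^ (ℓ + 1) := by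
      simp only [B₀, sum_mul, mul_assoc, ← pow_succ]
    have hzC : ∑ ℓ ∈ range (n + 1), z ^ (ℓ + 1) • C (ℓ + 1) =
        z • ∑ ℓ ∈ range (n + 1), z ^ ℓ • C (ℓ + 1) := by
      simp only [smul_sum, smul_smul, pow_succ']
    rw [hquot, add_mul, smul_mul_assoc, ← ih fun k => C (k + 1), sum_range_succ' _ (n + 1),
      sum_range_succ' (fun ℓ => C ℓ * G ^ ℓ) (n + 1), mul_sub, mul_smul_comm, mul_one, hB₀, hzC]
    simp only [B₀, smul_sub, pow_zero, one_smul, mul_one]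
    abel

theorem stmt10_general (m : ℕ) (p : ℕ)
    (Aℓ : ℕ → ℕ → Matrix (Fin m) (Fin m) ℝ)
    (G : Matrix (Fin m) (Fin m) ℝ)
    -- `G = ∑_{ℓ=-1}^q A_ℓ(G) G^{ℓ+1}` :
    (hGeq : G = ∑ ℓ ∈ Finset.range (p + 1), AfG Aℓ G ℓ * G ^ ℓ) :
    (∀ z : ℝ,
      z • (1 : Matrix (Fin m) (Fin m) ℝ) -
          ∑ ℓ ∈ Finset.range (p + 1), z ^ ℓ • AfG Aℓ G ℓ =
        (1 - ∑ i ∈ Finset.range p, z ^ i • Bstar p Aℓ G i) * (z • 1 - G)) ∧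
    (∀ z : ℝ, z ≠ 0 →
      (1 : Matrix (Fin m) (Fin m) ℝ) -
          ∑ ℓ ∈ Finset.range (p + 1), (z ^ ℓ * z⁻¹) • AfG Aℓ G ℓ =
        (1 - ∑ i ∈ Finset.range p, z ^ i • Bstar p Aℓ G i) * (1 - z⁻¹ • G)) := by
  have factor (z : ℝ) : z • (1 : Matrix (Fin m) (Fin m) ℝ) -
      ∑ ℓ ∈ range (p + 1), z ^ ℓ • AfG Aℓ G ℓ =
        (1 - ∑ i ∈ range p, z ^ i • Bstar p Aℓ G i) * (z • 1 - G) := by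
    have division := sum_pow_smul_sub_sum_mul_pow_eq_mul_sub (AfG Aℓ G) G z p
    rw [← hGeq] at division
    unfold Bstar
    rw [sub_mul, one_mul, ← division]
    abel
  refine ⟨factor, fun z hz => ?_⟩
  have hscale : (1 : Matrix (Fin m) (Fin m) ℝ) -
      ∑ ℓ ∈ range (p + 1), (z ^ ℓ * z⁻¹) • AfG Aℓ G ℓ =
        z⁻¹ • (z • 1 - ∑ ℓ ∈ range (p + 1), z ^ ℓ • AfG Aℓ G ℓ) := by
    simp only [smul_sub, smul_sum, smul_smul, inv_mul_cancel₀ hz, one_smul, mul_comm z⁻¹]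
  rw [hscale, factor, ← mul_smul_comm, smul_sub, smul_smul, inv_mul_cancel₀ hz, one_smul]

/-- the factorizations `z I - ∑ A_i(G) z^{i+1} = (I - ∑ B_i^* zⁱ)(z I - G)`
and `S_q(z) = U_q(z)(I - z⁻¹ G)`.  Here `p = q+1 ≥ 0` and `Aℓ ℓ' i` denotes
`A_{ℓ'-1, i}`. -/
theorem stmt10 (m : ℕ) (hm : 1 ≤ m) (p : ℕ)
    (Aℓ : ℕ → ℕ → Matrix (Fin m) (Fin m) ℝ)
    (G : Matrix (Fin m) (Fin m) ℝ)
    -- the series `A_ℓ(G)` converge entrywise: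
    (hsG : ∀ ℓ, Summable (fun i => Aℓ ℓ i * G ^ i))
    -- `G = ∑_{ℓ=-1}^q A_ℓ(G) G^{ℓ+1}` :
    (hGeq : G = ∑ ℓ ∈ Finset.range (p + 1), AfG Aℓ G ℓ * G ^ ℓ) :
    (∀ z : ℝ,
      z • (1 : Matrix (Fin m) (Fin m) ℝ) -
          ∑ ℓ ∈ Finset.range (p + 1), z ^ ℓ • AfG Aℓ G ℓ =
        (1 - ∑ i ∈ Finset.range p, z ^ i • Bstar p Aℓ G i) * (z • 1 - G)) ∧
    (∀ z : ℝ, z ≠ 0 →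
      (1 : Matrix (Fin m) (Fin m) ℝ) -
          ∑ ℓ ∈ Finset.range (p + 1), (z ^ ℓ * z⁻¹) • AfG Aℓ G ℓ =
        (1 - ∑ i ∈ Finset.range p, z ^ i • Bstar p Aℓ G i) * (1 - z⁻¹ • G)) :=
  stmt10_general m p Aℓ G hGeq
end

section
/- Assume q ≥ 1, A_{−1,0} = A_{−1} and A_{−1,i} = 0 for i ≥ 1 (i.e. A_{−1}(z) = A_{−1}), and A_{ℓ,0} ≥ A_ℓ entrywise for ℓ = 0,…,q (i.e. A_ℓ(z) ≥ A_ℓ coefficientwise). Let B_i^* = Σ_{j=i}^q A_j(G) G^{j−i} for i = 0,…,q and A_i^* = Σ_{j=i}^∞ A_j G^{j−i} for i ≥ 0. Then B_0^* = A_0^* and B_i^* ≤ A_i^* entrywise for i = 1,…,q. -/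
open Matrix

/-- Entrywise order on square real matrices. -/
def Mle {m : ℕ} (X Y : Matrix (Fin m) (Fin m) ℝ) : Prop := ∀ i j, X i j ≤ Y i j

/-- `G` is the minimal nonnegative solution of `X = ∑_{i=0}^∞ A_{i-1} Xⁱ`. -/
def IsMinSol {m : ℕ} (A : ℕ → Matrix (Fin m) (Fin m) ℝ)
    (G : Matrix (Fin m) (Fin m) ℝ) : Prop :=
  Mle 0 G ∧ Summable (fun i => A i * G ^ i) ∧ G = ∑' i, A i * G ^ i ∧
    ∀ Y, Mle 0 Y → Summable (fun i => A i * Y ^ i) → Y = ∑' i, A i * Y ^ i → Mle G Y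

/-- `A_i^* = ∑_{j=i}^∞ A_j G^{j-i}` (`A (i+k+1)` is `A_{i+k}` of the paper). -/
noncomputable def Astar {m : ℕ} (A : ℕ → Matrix (Fin m) (Fin m) ℝ)
    (G : Matrix (Fin m) (Fin m) ℝ) (i : ℕ) : Matrix (Fin m) (Fin m) ℝ :=
  ∑' k, A (i + k + 1) * G ^ k

/-! Writing `A_{i+k} = ∑_ℓ A_{ℓ,i+k-ℓ}` in every term of `A_i^* = ∑_k A_{i+k} G^k` and regrouping by `ℓ`,
the levels `ℓ ≥ i` contribute exactly `A_ℓ(G) G^{ℓ-i}`, i.e. `B_i^*`, while the levels `ℓ < i` contribute a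
nonnegative remainder. For `i = 0` the only remaining level is `ℓ = -1`, which vanishes because
`A_{-1}(z) = A_{-1}` has no terms of positive degree. -/

theorem HasSum.ite_sub_mul_pow {R : Type*} [Semiring R] [TopologicalSpace R]
    [IsTopologicalSemiring R] {M : ℕ → R} {G S : R} (h : HasSum (fun s => M s * G ^ s) S)
    (d : ℕ) : HasSum (fun k => (if d ≤ k then M (k - d) else 0) * G ^ k) (S * G ^ d) := by
  have hshift : Function.Injective (· + d) := add_left_injective d
  have hcomp : (fun k => (if d ≤ k then M (k - d) else 0) * G ^ k) ∘ (· + d) =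
      fun s => M s * G ^ s * G ^ d := by
    funext s
    simp [pow_add, mul_assoc]
  refine (hshift.hasSum_iff fun k hk => ?_).mp (hcomp ▸ h.mul_right (G ^ d))
  rw [if_neg fun hdk => hk ⟨k - d, Nat.sub_add_cancel hdk⟩, zero_mul]

section Mle

variable {m : ℕ} {X Y : Matrix (Fin m) (Fin m) ℝ}

theorem mle_zero_mul (hX : Mle 0 X) (hY : Mle 0 Y) : Mle 0 (X * Y) := fun a b => by
  rw [Matrix.zero_apply, Matrix.mul_apply]
  exact Finset.sum_nonneg fun r _ => mul_nonneg (hX a r) (hY r b)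

theorem mle_zero_pow (hX : Mle 0 X) (k : ℕ) : Mle 0 (X ^ k) := by
  induction k with
  | zero => intro a b; by_cases hab : a = b <;> simp [hab]
  | succ k ih => rw [pow_succ]; exact mle_zero_mul ih hX

theorem mle_zero_sum {ι : Type*} {s : Finset ι} {f : ι → Matrix (Fin m) (Fin m) ℝ}
    (h : ∀ i ∈ s, Mle 0 (f i)) : Mle 0 (∑ i ∈ s, f i) := fun a b => by
  rw [Matrix.sum_apply]
  exact Finset.sum_nonneg fun i hi => h i hi a b

theorem mle_of_mle_zero_sub (h : Mle 0 (Y - X)) : Mle X Y := fun a b =>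
  sub_nonneg.mp (h a b)

theorem mle_zero_of_hasSum {f : ℕ → Matrix (Fin m) (Fin m) ℝ} (hf : HasSum f X)
    (hnonneg : ∀ k, Mle 0 (f k)) : Mle 0 X := fun a b =>
  (Pi.hasSum.mp (Pi.hasSum.mp hf a) b).nonneg fun k => hnonneg k a b

end Mle

/-- The contribution of `Aℓ ℓ` to the `k`-th term `A (i + k + 1) * G ^ k` of `Astar A G i`. -/
noncomputable def levelTerm {m : ℕ} (Aℓ : ℕ → ℕ → Matrix (Fin m) (Fin m) ℝ)
    (G : Matrix (Fin m) (Fin m) ℝ) (i ℓ k : ℕ) : Matrix (Fin m) (Fin m) ℝ :=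
  (if ℓ ≤ i + k + 1 then Aℓ ℓ (i + k + 1 - ℓ) else 0) * G ^ k

section levelTerm

variable {m : ℕ} {Aℓ : ℕ → ℕ → Matrix (Fin m) (Fin m) ℝ} {G : Matrix (Fin m) (Fin m) ℝ}

theorem mle_zero_levelTerm (hAℓ0 : ∀ ℓ i, Mle 0 (Aℓ ℓ i)) (hG0 : Mle 0 G) (i ℓ k : ℕ) :
    Mle 0 (levelTerm Aℓ G i ℓ k) := by
  refine mle_zero_mul ?_ (mle_zero_pow hG0 k)
  split
  · exact hAℓ0 _ _
  · exact fun _ _ => le_rfl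

theorem levelTerm_zero (hconst : ∀ i, Aℓ 0 (i + 1) = 0) (i k : ℕ) : levelTerm Aℓ G i 0 k = 0 := by
  simp [levelTerm, hconst]

theorem hasSum_levelTerm (hsG : ∀ ℓ, Summable (fun i => Aℓ ℓ i * G ^ i)) (i t : ℕ) :
    HasSum (levelTerm Aℓ G i (i + 1 + t)) (AfG Aℓ G (i + 1 + t) * G ^ t) := by
  have hshifted : levelTerm Aℓ G i (i + 1 + t) =
      fun k => (if t ≤ k then Aℓ (i + 1 + t) (k - t) else 0) * G ^ k := by
    funext k
    unfold levelTerm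
    by_cases htk : t ≤ k
    · rw [if_pos (by omega), if_pos htk, show i + k + 1 - (i + 1 + t) = k - t by omega]
    · rw [if_neg (by omega), if_neg htk]
  rw [hshifted]
  exact (hsG (i + 1 + t)).hasSum.ite_sub_mul_pow t

theorem hasSum_sum_levelTerm_Bstar (p : ℕ) (hsG : ∀ ℓ, Summable (fun i => Aℓ ℓ i * G ^ i))
    (i : ℕ) :
    HasSum (fun k => ∑ t ∈ Finset.range (p - i), levelTerm Aℓ G i (i + 1 + t) k)
      (Bstar p Aℓ G i) :=
  hasSum_sum fun t _ => hasSum_levelTerm hsG i t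

theorem hasSum_sum_levelTerm_Astar_sub_Bstar {p : ℕ} {A : ℕ → Matrix (Fin m) (Fin m) ℝ}
    (hcompat : ∀ i, A i = ∑ ℓ ∈ Finset.range (p + 1), if ℓ ≤ i then Aℓ ℓ (i - ℓ) else 0)
    (hsG : ∀ ℓ, Summable (fun i => Aℓ ℓ i * G ^ i))
    {i : ℕ} (hsAstar : Summable (fun k => A (i + k + 1) * G ^ k)) (hip : i ≤ p) :
    HasSum (fun k => ∑ ℓ ∈ Finset.range (i + 1), levelTerm Aℓ G i ℓ k)
      (Astar A G i - Bstar p Aℓ G i) := by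
  have hsplit : ∀ k, A (i + k + 1) * G ^ k -
      ∑ t ∈ Finset.range (p - i), levelTerm Aℓ G i (i + 1 + t) k =
      ∑ ℓ ∈ Finset.range (i + 1), levelTerm Aℓ G i ℓ k := by
    intro k
    rw [sub_eq_iff_eq_add, hcompat, Finset.sum_mul, show p + 1 = i + 1 + (p - i) by omega,
      Finset.sum_range_add]
    rfl
  have h := hsAstar.hasSum.sub (hasSum_sum_levelTerm_Bstar p hsG i)
  simp only [hsplit] at h
  exact h

end levelTerm

theorem stmt11_general (m : ℕ) (p : ℕ)
    (A : ℕ → Matrix (Fin m) (Fin m) ℝ)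
    (Aℓ : ℕ → ℕ → Matrix (Fin m) (Fin m) ℝ)
    (hAℓ0 : ∀ ℓ i, Mle 0 (Aℓ ℓ i))
    (hcompat : ∀ i, A i = ∑ ℓ ∈ Finset.range (p + 1),
      if ℓ ≤ i then Aℓ ℓ (i - ℓ) else 0)
    (hm2 : ∀ i, Aℓ 0 (i + 1) = 0)
    (G : Matrix (Fin m) (Fin m) ℝ) (hG : IsMinSol A G)
    -- all series occurring converge entrywise:
    (hsG : ∀ ℓ, Summable (fun i => Aℓ ℓ i * G ^ i))
    (hsAstar : ∀ j, Summable (fun k => A (j + k + 1) * G ^ k)) :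
    Bstar p Aℓ G 0 = Astar A G 0 ∧
    ∀ i, 1 ≤ i → i ≤ p - 1 → Mle (Bstar p Aℓ G i) (Astar A G i) := by
  have hremainder := fun i (hip : i ≤ p) =>
    hasSum_sum_levelTerm_Astar_sub_Bstar hcompat hsG (hsAstar i) hip
  refine ⟨?_, fun i _ hip => ?_⟩
  · have hzero : HasSum (fun _ : ℕ => 0) (Astar A G 0 - Bstar p Aℓ G 0) := by
      simpa only [zero_add, Finset.sum_range_one, levelTerm_zero hm2] using hremainder 0 (Nat.zero_le p)
    exact (sub_eq_zero.mp (hzero.unique hasSum_zero)).symm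
  · exact mle_of_mle_zero_sub <| mle_zero_of_hasSum (hremainder i (by omega)) fun k =>
      mle_zero_sum fun ℓ _ => mle_zero_levelTerm hAℓ0 hG.1 i ℓ k

/-- part of Theorem 4.2: `B_0^* = A_0^*` and `B_i^* ≤ A_i^*` for
`i = 1,…,q`.  Here `p = q+1 ≥ 2`; `hm1`, `hm2` say `A_{-1}(z) = A_{-1}` and
`hge` says `A_ℓ(z) ≥ A_ℓ` for `ℓ = 0,…,q`. -/
theorem stmt11 (m : ℕ) (hm : 1 ≤ m) (p : ℕ) (hp : 2 ≤ p)
    (A : ℕ → Matrix (Fin m) (Fin m) ℝ)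
    (Aℓ : ℕ → ℕ → Matrix (Fin m) (Fin m) ℝ)
    (hA0 : ∀ i, Mle 0 (A i)) (hAℓ0 : ∀ ℓ i, Mle 0 (Aℓ ℓ i))
    (hsum : Summable A)
    (hrow : ∀ k, ∑ j, (∑' i, A i) k j ≤ 1)
    (hcompat : ∀ i, A i = ∑ ℓ ∈ Finset.range (p + 1),
      if ℓ ≤ i then Aℓ ℓ (i - ℓ) else 0)
    (hm1 : Aℓ 0 0 = A 0) (hm2 : ∀ i, Aℓ 0 (i + 1) = 0)
    (hge : ∀ ℓ, 1 ≤ ℓ → ℓ ≤ p → Mle (A ℓ) (Aℓ ℓ 0))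
    (G : Matrix (Fin m) (Fin m) ℝ) (hG : IsMinSol A G)
    -- all series occurring converge entrywise:
    (hsG : ∀ ℓ, Summable (fun i => Aℓ ℓ i * G ^ i))
    (hsAstar : ∀ j, Summable (fun k => A (j + k + 1) * G ^ k)) :
    Bstar p Aℓ G 0 = Astar A G 0 ∧
    ∀ i, 1 ≤ i → i ≤ p - 1 → Mle (Bstar p Aℓ G i) (Astar A G i) :=
  stmt11_general m p A Aℓ hAℓ0 hcompat hm2 G hG hsG hsAstar
end

section
/- Assume that Σ_{i=−1}^∞ Aᵢ is stochastic (row sums equal to 1) and that the minimal nonnegative solution G of X = Σ_{i=0}^∞ A_{i−1} Xⁱ is stochastic (in the paper this holds when the drift μ is nonpositive). Let {X_k}_{k≥0} be any sequence of m×m matrices such that X₀ is stochastic and, for every k ≥ 0, X_{k+1} is a stochastic solution of the matrix equation X = Σ_{ℓ=−1}^q A_ℓ(X_k) X^{ℓ+1}. Then every X_k is stochastic and X_k converges entrywise to G as k → ∞. -/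
open Matrix

/-- A stochastic matrix: nonnegative with unit row sums. -/
def IsStoch {m : ℕ} (X : Matrix (Fin m) (Fin m) ℝ) : Prop :=
  Mle 0 X ∧ ∀ r, ∑ c, X r c = 1

/-
The natural iteration `Z₀ = 0`, `Z_{k+1} = ∑ A_{i-1} Z_kⁱ` increases entrywise and stays below
any nonnegative solution, so it converges to the minimal solution `G`. Regrouping the power series
by the splitting `A_i = ∑_ℓ A_{ℓ,i-ℓ}` turns its step into `Z_{k+1} = ∑_ℓ A_ℓ(Z_k) Z_k^{ℓ+1}`, and
monotonicity of the right-hand side in both arguments gives `Z_k ≤ X_n` for all `n ≥ k` by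
induction on `k`. Finally `Z_k ≤ X_k` with `X_k` stochastic pins `X_k` between `Z_k` and
`Z_k` plus the row defect `1 - Z_k 1`, which tends to `0` because `G` is stochastic.
-/

open Filter Topology

namespace Matrix

variable {m : ℕ}

theorem tsum_apply {ι : Type*} {f : ι → Matrix (Fin m) (Fin m) ℝ} (hf : Summable f)
    (r c : Fin m) : (∑' n, f n) r c = ∑' n, f n r c := by
  have hrow : (∑' n, f n) r = ∑' n, f n r := _root_.tsum_apply hf
  rw [hrow, _root_.tsum_apply (Pi.summable.mp hf r)]

theorem summable_apply {ι : Type*} {f : ι → Matrix (Fin m) (Fin m) ℝ} (hf : Summable f)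
    (r c : Fin m) : Summable fun n => f n r c :=
  Pi.summable.mp (Pi.summable.mp hf r) c

theorem tendsto_iff_forall_apply {α : Type*} {l : Filter α}
    {Y : α → Matrix (Fin m) (Fin m) ℝ} {L : Matrix (Fin m) (Fin m) ℝ} :
    Tendsto Y l (𝓝 L) ↔ ∀ r c, Tendsto (fun k => Y k r c) l (𝓝 (L r c)) :=
  tendsto_pi_nhds.trans (forall_congr' fun _ => tendsto_pi_nhds)

end Matrix

namespace Mle

variable {m : ℕ}

theorem refl (X : Matrix (Fin m) (Fin m) ℝ) : Mle X X := fun _ _ => le_rfl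

theorem mul_le_mul {A A' B B' : Matrix (Fin m) (Fin m) ℝ} (hAA' : Mle A A') (hBB' : Mle B B')
    (hA : Mle 0 A) (hB : Mle 0 B) : Mle (A * B) (A' * B') := fun i j => by
  simp only [Matrix.mul_apply]
  exact Finset.sum_le_sum fun k _ => _root_.mul_le_mul (hAA' i k) (hBB' k j) (hB k j)
    ((hA i k).trans (hAA' i k))

theorem mul_nonneg {A B : Matrix (Fin m) (Fin m) ℝ} (hA : Mle 0 A) (hB : Mle 0 B) :
    Mle 0 (A * B) := by
  simpa using mul_le_mul hA hB (refl 0) (refl 0)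

theorem pow_nonneg {A : Matrix (Fin m) (Fin m) ℝ} (hA : Mle 0 A) : ∀ i, Mle 0 (A ^ i)
  | 0 => fun r c => by by_cases h : r = c <;> simp [h]
  | i + 1 => by rw [pow_succ]; exact mul_nonneg (pow_nonneg hA i) hA

theorem pow_le_pow_left {A B : Matrix (Fin m) (Fin m) ℝ} (hA : Mle 0 A) (hAB : Mle A B) :
    ∀ i, Mle (A ^ i) (B ^ i)
  | 0 => refl 1
  | i + 1 => by
    rw [pow_succ, pow_succ]
    exact mul_le_mul (pow_le_pow_left hA hAB i) hAB (pow_nonneg hA i) hA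

theorem sum_le_sum {s : Finset ℕ} {f g : ℕ → Matrix (Fin m) (Fin m) ℝ}
    (h : ∀ ℓ ∈ s, Mle (f ℓ) (g ℓ)) : Mle (∑ ℓ ∈ s, f ℓ) (∑ ℓ ∈ s, g ℓ) := fun r c => by
  simp only [Matrix.sum_apply]
  exact Finset.sum_le_sum fun ℓ hℓ => h ℓ hℓ r c

theorem summable_of_le {f g : ℕ → Matrix (Fin m) (Fin m) ℝ} (hf : ∀ n, Mle 0 (f n))
    (hfg : ∀ n, Mle (f n) (g n)) (hg : Summable g) : Summable f :=
  Pi.summable.mpr fun r => Pi.summable.mpr fun c =>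
    (Matrix.summable_apply hg r c).of_nonneg_of_le (fun n => hf n r c) (fun n => hfg n r c)

theorem tsum_le_tsum {f g : ℕ → Matrix (Fin m) (Fin m) ℝ} (hfg : ∀ n, Mle (f n) (g n))
    (hf : Summable f) (hg : Summable g) : Mle (∑' n, f n) (∑' n, g n) := fun r c => by
  rw [Matrix.tsum_apply hf, Matrix.tsum_apply hg]
  exact Summable.tsum_le_tsum (fun n => hfg n r c) (Matrix.summable_apply hf r c)
    (Matrix.summable_apply hg r c)

theorem tsum_nonneg {f : ℕ → Matrix (Fin m) (Fin m) ℝ} (hf : ∀ n, Mle 0 (f n)) :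
    Mle 0 (∑' n, f n) := by
  by_cases hs : Summable f
  · intro r c
    rw [Matrix.tsum_apply hs]
    exact _root_.tsum_nonneg fun n => hf n r c
  · rw [tsum_eq_zero_of_not_summable hs]
    exact refl 0

end Mle

section PowerSeries

variable {m : ℕ} {A : ℕ → Matrix (Fin m) (Fin m) ℝ}

theorem summable_mul_pow_of_le (hA : ∀ i, Mle 0 (A i)) {Y Z : Matrix (Fin m) (Fin m) ℝ}
    (hY : Mle 0 Y) (hYZ : Mle Y Z) (hZ : Summable fun i => A i * Z ^ i) :
    Summable fun i => A i * Y ^ i :=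
  Mle.summable_of_le (fun i => Mle.mul_nonneg (hA i) (Mle.pow_nonneg hY i))
    (fun i => Mle.mul_le_mul (Mle.refl _) (Mle.pow_le_pow_left hY hYZ i) (hA i)
      (Mle.pow_nonneg hY i)) hZ

theorem tsum_mul_pow_nonneg (hA : ∀ i, Mle 0 (A i)) {Y : Matrix (Fin m) (Fin m) ℝ}
    (hY : Mle 0 Y) : Mle 0 (∑' i, A i * Y ^ i) :=
  Mle.tsum_nonneg fun i => Mle.mul_nonneg (hA i) (Mle.pow_nonneg hY i)

theorem tsum_mul_pow_le (hA : ∀ i, Mle 0 (A i)) {Y Z : Matrix (Fin m) (Fin m) ℝ}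
    (hY : Mle 0 Y) (hYZ : Mle Y Z) (hZ : Summable fun i => A i * Z ^ i) :
    Mle (∑' i, A i * Y ^ i) (∑' i, A i * Z ^ i) :=
  Mle.tsum_le_tsum
    (fun i => Mle.mul_le_mul (Mle.refl _) (Mle.pow_le_pow_left hY hYZ i) (hA i)
      (Mle.pow_nonneg hY i))
    (summable_mul_pow_of_le hA hY hYZ hZ) hZ

theorem tendsto_tsum_mul_pow {α : Type*} {l : Filter α} (hA : ∀ i, Mle 0 (A i))
    {Y : α → Matrix (Fin m) (Fin m) ℝ} {L G : Matrix (Fin m) (Fin m) ℝ}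
    (hY0 : ∀ k, Mle 0 (Y k)) (hYG : ∀ k, Mle (Y k) G) (hG : Summable fun i => A i * G ^ i)
    (hL0 : Mle 0 L) (hLG : Mle L G) (hYL : Tendsto Y l (𝓝 L)) :
    Tendsto (fun k => ∑' i, A i * Y k ^ i) l (𝓝 (∑' i, A i * L ^ i)) := by
  refine Matrix.tendsto_iff_forall_apply.2 fun r c => ?_
  simp only [Matrix.tsum_apply (summable_mul_pow_of_le hA (hY0 _) (hYG _) hG),
    Matrix.tsum_apply (summable_mul_pow_of_le hA hL0 hLG hG)]
  refine tendsto_tsum_of_dominated_convergence (Matrix.summable_apply hG r c)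
    (fun i => Matrix.tendsto_iff_forall_apply.1 ((hYL.pow i).const_mul (A i)) r c)
    (Eventually.of_forall fun k i => ?_)
  rw [Real.norm_eq_abs, abs_of_nonneg (Mle.mul_nonneg (hA i) (Mle.pow_nonneg (hY0 k) i) r c)]
  exact Mle.mul_le_mul (Mle.refl _) (Mle.pow_le_pow_left (hY0 k) (hYG k) i) (hA i)
    (Mle.pow_nonneg (hY0 k) i) r c

theorem hasSum_ite_le_sub {M : Type*} [AddCommMonoid M] [TopologicalSpace M] {f : ℕ → M} {a : M}
    (hf : HasSum f a) (ℓ : ℕ) : HasSum (fun i => if ℓ ≤ i then f (i - ℓ) else 0) a := by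
  refine (Function.Injective.hasSum_iff (add_left_injective ℓ) fun i hi => ?_).1 ?_
  · rw [if_neg fun hℓi => hi ⟨i - ℓ, Nat.sub_add_cancel hℓi⟩]
  · simpa [Function.comp_def] using hf

theorem tsum_mul_pow_eq_sum {p : ℕ} (Aℓ : ℕ → ℕ → Matrix (Fin m) (Fin m) ℝ)
    (hcompat : ∀ i, A i = ∑ ℓ ∈ Finset.range (p + 1), if ℓ ≤ i then Aℓ ℓ (i - ℓ) else 0)
    {Y : Matrix (Fin m) (Fin m) ℝ} (hY : ∀ ℓ, Summable fun i => Aℓ ℓ i * Y ^ i) :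
    ∑' i, A i * Y ^ i = ∑ ℓ ∈ Finset.range (p + 1), (∑' i, Aℓ ℓ i * Y ^ i) * Y ^ ℓ := by
  refine HasSum.tsum_eq ?_
  have hterm (ℓ : ℕ) : HasSum (fun i => (if ℓ ≤ i then Aℓ ℓ (i - ℓ) else 0) * Y ^ i)
      ((∑' i, Aℓ ℓ i * Y ^ i) * Y ^ ℓ) := by
    have hshift := hasSum_ite_le_sub ((hY ℓ).hasSum.mul_right (Y ^ ℓ)) ℓ
    refine hshift.congr_fun fun i => ?_
    split_ifs with hℓi
    · rw [mul_assoc, pow_sub_mul_pow Y hℓi]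
    · rw [zero_mul]
  have hsum := hasSum_sum fun ℓ (_ : ℓ ∈ Finset.range (p + 1)) => hterm ℓ
  refine hsum.congr_fun fun i => ?_
  rw [hcompat i, Finset.sum_mul]

end PowerSeries

noncomputable def natIter {m : ℕ} (A : ℕ → Matrix (Fin m) (Fin m) ℝ) :
    ℕ → Matrix (Fin m) (Fin m) ℝ
  | 0 => 0
  | k + 1 => ∑' i, A i * natIter A k ^ i

section NaturalIteration

variable {m : ℕ} {A : ℕ → Matrix (Fin m) (Fin m) ℝ}

theorem natIter_nonneg (hA : ∀ i, Mle 0 (A i)) : ∀ k, Mle 0 (natIter A k)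
  | 0 => Mle.refl 0
  | k + 1 => tsum_mul_pow_nonneg hA (natIter_nonneg hA k)

theorem natIter_le_of_eq (hA : ∀ i, Mle 0 (A i)) {G : Matrix (Fin m) (Fin m) ℝ} (hG0 : Mle 0 G)
    (hGsum : Summable fun i => A i * G ^ i) (hGeq : G = ∑' i, A i * G ^ i) :
    ∀ k, Mle (natIter A k) G
  | 0 => hG0
  | k + 1 => hGeq ▸ tsum_mul_pow_le hA (natIter_nonneg hA k)
      (natIter_le_of_eq hA hG0 hGsum hGeq k) hGsum

theorem natIter_le_succ (hA : ∀ i, Mle 0 (A i)) {G : Matrix (Fin m) (Fin m) ℝ} (hG0 : Mle 0 G)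
    (hGsum : Summable fun i => A i * G ^ i) (hGeq : G = ∑' i, A i * G ^ i) :
    ∀ k, Mle (natIter A k) (natIter A (k + 1))
  | 0 => natIter_nonneg hA 1
  | k + 1 => tsum_mul_pow_le hA (natIter_nonneg hA k) (natIter_le_succ hA hG0 hGsum hGeq k)
      (summable_mul_pow_of_le hA (natIter_nonneg hA _)
        (natIter_le_of_eq hA hG0 hGsum hGeq _) hGsum)

theorem tendsto_natIter (hA : ∀ i, Mle 0 (A i)) {G : Matrix (Fin m) (Fin m) ℝ}
    (hG : IsMinSol A G) : Tendsto (natIter A) atTop (𝓝 G) := by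
  obtain ⟨hG0, hGsum, hGeq, hGmin⟩ := hG
  have hZ0 := natIter_nonneg hA
  have hZG := natIter_le_of_eq hA hG0 hGsum hGeq
  have hbdd : ∀ r c, BddAbove (Set.range fun k => natIter A k r c) :=
    fun r c => ⟨G r c, by rintro x ⟨k, rfl⟩; exact hZG k r c⟩
  set L : Matrix (Fin m) (Fin m) ℝ := fun r c => ⨆ k, natIter A k r c
  have hZL : Tendsto (natIter A) atTop (𝓝 L) :=
    Matrix.tendsto_iff_forall_apply.2 fun r c => tendsto_atTop_ciSup
      (monotone_nat_of_le_succ fun k => natIter_le_succ hA hG0 hGsum hGeq k r c) (hbdd r c)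
  have hL0 : Mle 0 L := fun r c => (hZ0 0 r c).trans (le_ciSup (hbdd r c) 0)
  have hLG : Mle L G := fun r c => ciSup_le fun k => hZG k r c
  have hLeq : L = ∑' i, A i * L ^ i :=
    tendsto_nhds_unique (hZL.comp (tendsto_add_atTop_nat 1))
      (tendsto_tsum_mul_pow hA hZ0 hZG hGsum hL0 hLG hZL)
  have hGL := hGmin L hL0 (summable_mul_pow_of_le hA hL0 hLG hGsum) hLeq
  rwa [show L = G from Matrix.ext fun r c => le_antisymm (hLG r c) (hGL r c)] at hZL

theorem natIter_le_of_iterate {p : ℕ} {Aℓ : ℕ → ℕ → Matrix (Fin m) (Fin m) ℝ}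
    (hA : ∀ i, Mle 0 (A i)) (hAℓ : ∀ ℓ i, Mle 0 (Aℓ ℓ i))
    (hcompat : ∀ i, A i = ∑ ℓ ∈ Finset.range (p + 1), if ℓ ≤ i then Aℓ ℓ (i - ℓ) else 0)
    (hAf : ∀ ℓ (X : Matrix (Fin m) (Fin m) ℝ), Mle 0 X → (∀ r, ∑ c, X r c ≤ 1) →
      Summable (fun i => Aℓ ℓ i * X ^ i))
    {X : ℕ → Matrix (Fin m) (Fin m) ℝ} (hX : ∀ n, IsStoch (X n))
    (hXeq : ∀ n, X (n + 1) = ∑ ℓ ∈ Finset.range (p + 1),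
      (∑' i, Aℓ ℓ i * X n ^ i) * X (n + 1) ^ ℓ) :
    ∀ k n, k ≤ n → Mle (natIter A k) (X n)
  | 0, n, _ => (hX n).1
  | k + 1, n + 1, hkn => by
    have hZ0 := natIter_nonneg hA k
    have hZX (n' : ℕ) (hn' : k ≤ n') : Mle (natIter A k) (X n') :=
      natIter_le_of_iterate hA hAℓ hcompat hAf hX hXeq k n' hn'
    have hZsub (r : Fin m) : ∑ c, natIter A k r c ≤ 1 :=
      (Finset.sum_le_sum fun c _ => hZX n (by omega) r c).trans ((hX n).2 r).le
    rw [natIter, tsum_mul_pow_eq_sum Aℓ hcompat fun ℓ => hAf ℓ _ hZ0 hZsub, hXeq n]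
    refine Mle.sum_le_sum fun ℓ _ =>
      Mle.mul_le_mul ?_ (Mle.pow_le_pow_left hZ0 (hZX _ (by omega)) ℓ)
      (tsum_mul_pow_nonneg (hAℓ ℓ) hZ0) (Mle.pow_nonneg hZ0 ℓ)
    exact tsum_mul_pow_le (hAℓ ℓ) hZ0 (hZX n (by omega))
      (hAf ℓ (X n) (hX n).1 fun r => ((hX n).2 r).le)

end NaturalIteration

theorem tendsto_of_le_of_rowSum_le {m : ℕ} {α : Type*} {l : Filter α}
    {Z X : α → Matrix (Fin m) (Fin m) ℝ} {G : Matrix (Fin m) (Fin m) ℝ}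
    (hZ : Tendsto Z l (𝓝 G)) (hG : ∀ r, ∑ c, G r c = 1) (hZX : ∀ n, Mle (Z n) (X n))
    (hX : ∀ n r, ∑ c, X n r c ≤ 1) : Tendsto X l (𝓝 G) := by
  refine Matrix.tendsto_iff_forall_apply.2 fun r c => ?_
  have hZrc := Matrix.tendsto_iff_forall_apply.1 hZ
  have hdefect : Tendsto (fun n => Z n r c + (1 - ∑ c', Z n r c')) l (𝓝 (G r c)) := by
    simpa [hG r] using (hZrc r c).add ((tendsto_const_nhds (x := (1 : ℝ))).sub
      (tendsto_finsetSum Finset.univ fun c' _ => hZrc r c'))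
  refine tendsto_of_tendsto_of_tendsto_of_le_of_le (hZrc r c) hdefect (fun n => hZX n r c)
    fun n => ?_
  have hsingle : X n r c - Z n r c ≤ ∑ c', (X n r c' - Z n r c') :=
    Finset.single_le_sum (f := fun c' => X n r c' - Z n r c')
      (fun c' _ => sub_nonneg.2 (hZX n r c')) (Finset.mem_univ c)
  rw [Finset.sum_sub_distrib] at hsingle
  linarith [hX n r]

theorem stmt15_general (m : ℕ) (p : ℕ)
    (A : ℕ → Matrix (Fin m) (Fin m) ℝ)
    (Aℓ : ℕ → ℕ → Matrix (Fin m) (Fin m) ℝ)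
    (hA0 : ∀ i, Mle 0 (A i)) (hAℓ0 : ∀ ℓ i, Mle 0 (Aℓ ℓ i))
    (hcompat : ∀ i, A i = ∑ ℓ ∈ Finset.range (p + 1),
      if ℓ ≤ i then Aℓ ℓ (i - ℓ) else 0)
    -- all series occurring converge entrywise:
    (hAf : ∀ ℓ (X : Matrix (Fin m) (Fin m) ℝ), Mle 0 X → (∀ r, ∑ c, X r c ≤ 1) →
      Summable (fun i => Aℓ ℓ i * X ^ i))
    (G : Matrix (Fin m) (Fin m) ℝ) (hG : IsMinSol A G) (hGst : IsStoch G)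
    (X : ℕ → Matrix (Fin m) (Fin m) ℝ)
    (hX0 : IsStoch (X 0))
    -- `X_{k+1}` is a stochastic solution of `X = ∑_{ℓ=-1}^q A_ℓ(X_k) X^{ℓ+1}`:
    (hXk : ∀ k, IsStoch (X (k + 1)) ∧
      X (k + 1) = ∑ ℓ ∈ Finset.range (p + 1),
        (∑' i, Aℓ ℓ i * (X k) ^ i) * (X (k + 1)) ^ ℓ) :
    (∀ k, IsStoch (X k)) ∧ Filter.Tendsto X Filter.atTop (nhds G) := by
  have hX : ∀ k, IsStoch (X k)
    | 0 => hX0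
    | k + 1 => (hXk k).1
  have hZX (n : ℕ) : Mle (natIter A n) (X n) :=
    natIter_le_of_iterate hA0 hAℓ0 hcompat hAf hX (fun k => (hXk k).2) n n le_rfl
  exact ⟨hX, tendsto_of_le_of_rowSum_le (tendsto_natIter hA0 hG) hGst.2 hZX
    fun n r => ((hX n).2 r).le⟩

/-- Theorem 5.1: convergence with a stochastic starting matrix.
Here `A i` denotes `A_{i-1}`, `p = q+1 ≥ 0`, `Aℓ ℓ' i` denotes `A_{ℓ'-1, i}`. -/
theorem stmt15 (m : ℕ) (hm : 1 ≤ m) (p : ℕ)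
    (A : ℕ → Matrix (Fin m) (Fin m) ℝ)
    (Aℓ : ℕ → ℕ → Matrix (Fin m) (Fin m) ℝ)
    (hA0 : ∀ i, Mle 0 (A i)) (hAℓ0 : ∀ ℓ i, Mle 0 (Aℓ ℓ i))
    (hsum : Summable A)
    -- `∑ Aᵢ` is stochastic:
    (hstoch : ∀ r, ∑ c, (∑' i, A i) r c = 1)
    (hcompat : ∀ i, A i = ∑ ℓ ∈ Finset.range (p + 1),
      if ℓ ≤ i then Aℓ ℓ (i - ℓ) else 0)
    -- all series occurring converge entrywise:
    (hAf : ∀ ℓ (X : Matrix (Fin m) (Fin m) ℝ), Mle 0 X → (∀ r, ∑ c, X r c ≤ 1) →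
      Summable (fun i => Aℓ ℓ i * X ^ i))
    (G : Matrix (Fin m) (Fin m) ℝ) (hG : IsMinSol A G) (hGst : IsStoch G)
    (X : ℕ → Matrix (Fin m) (Fin m) ℝ)
    (hX0 : IsStoch (X 0))
    -- `X_{k+1}` is a stochastic solution of `X = ∑_{ℓ=-1}^q A_ℓ(X_k) X^{ℓ+1}`:
    (hXk : ∀ k, IsStoch (X (k + 1)) ∧
      X (k + 1) = ∑ ℓ ∈ Finset.range (p + 1),
        (∑' i, Aℓ ℓ i * (X k) ^ i) * (X (k + 1)) ^ ℓ) :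
    (∀ k, IsStoch (X k)) ∧ Filter.Tendsto X Filter.atTop (nhds G) :=
  stmt15_general m p A Aℓ hA0 hAℓ0 hcompat hAf G hG hGst X hX0 hXk
end

section
/- Let G, X_k, X_{k+1} be m×m matrices (with all series below convergent entrywise) such that G = Σ_{ℓ=−1}^q A_ℓ(G) G^{ℓ+1} and X_{k+1} = Σ_{ℓ=−1}^q A_ℓ(X_k) X_{k+1}^{ℓ+1}. Then (I_{m²} − Q(X_k, X_{k+1}))·vec(G − X_{k+1}) = P(X_k)·vec(G − X_k), where Q(X,Y) = Σ_{ℓ=0}^q Σ_{s=0}^ℓ (G^s)ᵀ ⊗ (A_ℓ(X) Y^{ℓ−s}) and P(X) = Σ_{ℓ=−1}^q Σ_{i=1}^∞ Σ_{s=ℓ+1}^{ℓ+i} (G^s)ᵀ ⊗ (A_{ℓ,i} X^{i+ℓ−s}). -/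
open Matrix Kronecker

/-- `vec(C)`: the columns of `C` stacked, so that `vec(AXB) = (Bᵀ ⊗ A) vec(X)`. -/
def vecM {m : ℕ} (C : Matrix (Fin m) (Fin m) ℝ) : Fin m × Fin m → ℝ :=
  fun pr => C pr.2 pr.1

/-- `Q(X,Y) = ∑_{ℓ=0}^q ∑_{s=0}^ℓ (G^s)ᵀ ⊗ (A_ℓ(X) Y^{ℓ-s})` (shifted index
`ℓ' = ℓ+1 ∈ {0,…,p}`, `p = q+1`). -/
noncomputable def Qmat {m : ℕ} (p : ℕ) (Aℓ : ℕ → ℕ → Matrix (Fin m) (Fin m) ℝ)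
    (G X Y : Matrix (Fin m) (Fin m) ℝ) :
    Matrix (Fin m × Fin m) (Fin m × Fin m) ℝ :=
  ∑ ℓ ∈ Finset.range (p + 1), ∑ s ∈ Finset.range ℓ,
    (G ^ s)ᵀ ⊗ₖ ((∑' i, Aℓ ℓ i * X ^ i) * Y ^ (ℓ - 1 - s))

/-- `P(X) = ∑_{ℓ=-1}^q ∑_{i=1}^∞ ∑_{s=ℓ+1}^{ℓ+i} (G^s)ᵀ ⊗ (A_{ℓ,i} X^{i+ℓ-s})`
(shifted index). -/
noncomputable def Pmat {m : ℕ} (p : ℕ) (Aℓ : ℕ → ℕ → Matrix (Fin m) (Fin m) ℝ)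
    (G X : Matrix (Fin m) (Fin m) ℝ) :
    Matrix (Fin m × Fin m) (Fin m × Fin m) ℝ :=
  ∑ ℓ ∈ Finset.range (p + 1), ∑' i : ℕ,
    ∑ s ∈ Finset.Ico ℓ (ℓ + i + 1), (G ^ s)ᵀ ⊗ₖ (Aℓ ℓ (i + 1) * X ^ (ℓ + i - s))

/-!
Both sides are vectorisations of `∑_ℓ (A_ℓ(G) - A_ℓ(X_k)) G^ℓ`. On the left, the two fixed-point
equations give `G - X_{k+1} = ∑_ℓ (A_ℓ(G) G^ℓ - A_ℓ(X_k) X_{k+1}^ℓ)`, and `Q` applied to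
`vec(G - X_{k+1})` is `vec ∑_ℓ A_ℓ(X_k) (G^ℓ - X_{k+1}^ℓ)`. On the right, the `i`-th term of `P(X_k)`
applied to `vec(G - X_k)` is `vec (A_{ℓ,i} (G^i - X_k^i) G^ℓ)`. Both computations rest on the
noncommutative telescoping identity `a^n - b^n = ∑_{s<n} b^{n-1-s} (a - b) a^s`.
-/

open Finset

theorem pow_sub_pow_eq_sum {R : Type*} [Ring R] (a b : R) (n : ℕ) :
    a ^ n - b ^ n = ∑ s ∈ range n, b ^ (n - 1 - s) * (a - b) * a ^ s := by
  induction n with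
  | zero => simp
  | succ n ih =>
    have hshift : ∀ s ∈ range n, b ^ (n + 1 - 1 - (s + 1)) * (a - b) * a ^ (s + 1) =
        b ^ (n - 1 - s) * (a - b) * a ^ s * a := fun s _ => by
      rw [show n + 1 - 1 - (s + 1) = n - 1 - s by omega, pow_succ]
      simp only [mul_assoc]
    rw [sum_range_succ', sum_congr rfl hshift, ← sum_mul, ← ih, pow_succ, pow_succ,
      Nat.add_sub_cancel, Nat.sub_zero, pow_zero, mul_one]
    noncomm_ring

theorem HasSum.matrix_mulVec {ι m n R : Type*} [Fintype n] [NonUnitalNonAssocSemiring R]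
    [TopologicalSpace R] [IsTopologicalSemiring R] {f : ι → Matrix m n R} {a : Matrix m n R}
    (hf : HasSum f a) (v : n → R) : HasSum (fun i => f i *ᵥ v) (a *ᵥ v) :=
  hf.map (mulVec.addMonoidHomLeft v) (continuous_id.matrix_mulVec continuous_const)

theorem hasSum_mul_pow_succ_sub {R : Type*} [Ring R] [TopologicalSpace R]
    [IsTopologicalAddGroup R] {A : ℕ → R} {x y a b : R}
    (hx : HasSum (fun i => A i * x ^ i) a) (hy : HasSum (fun i => A i * y ^ i) b) :
    HasSum (fun i => A (i + 1) * (x ^ (i + 1) - y ^ (i + 1))) (a - b) := by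
  have h := (hasSum_nat_add_iff' 1).2 (hx.sub hy)
  simpa [mul_sub] using h

section Vectorisation

variable {m : ℕ}

theorem vecM_sub (A B : Matrix (Fin m) (Fin m) ℝ) : vecM (A - B) = vecM A - vecM B := rfl

theorem vecM_sum {ι : Type*} (s : Finset ι) (f : ι → Matrix (Fin m) (Fin m) ℝ) :
    vecM (∑ x ∈ s, f x) = ∑ x ∈ s, vecM (f x) := by
  funext pr
  simp [vecM, Matrix.sum_apply]

theorem HasSum.vecM {ι : Type*} {f : ι → Matrix (Fin m) (Fin m) ℝ} {a : Matrix (Fin m) (Fin m) ℝ}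
    (hf : HasSum f a) : HasSum (fun i => _root_.vecM (f i)) (_root_.vecM a) :=
  Pi.hasSum.2 fun pr => Pi.hasSum.1 (Pi.hasSum.1 hf pr.2) pr.1

theorem transpose_kronecker_mulVec_vecM (A B X : Matrix (Fin m) (Fin m) ℝ) :
    (Bᵀ ⊗ₖ A) *ᵥ vecM X = vecM (A * X * B) := by
  funext ⟨j, i⟩
  simp only [vecM, mulVec, dotProduct, kroneckerMap_apply, transpose_apply, mul_apply,
    Fintype.sum_prod_type, Finset.sum_mul]
  exact sum_congr rfl fun k _ => sum_congr rfl fun l _ => by ring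

theorem Qmat_mulVec_vecM (p : ℕ) (Aℓ : ℕ → ℕ → Matrix (Fin m) (Fin m) ℝ)
    (G X Y : Matrix (Fin m) (Fin m) ℝ) :
    Qmat p Aℓ G X Y *ᵥ vecM (G - Y) =
      vecM (∑ ℓ ∈ range (p + 1), (∑' i, Aℓ ℓ i * X ^ i) * (G ^ ℓ - Y ^ ℓ)) := by
  simp only [Qmat, sum_mulVec, transpose_kronecker_mulVec_vecM, ← vecM_sum]
  congr 1
  refine sum_congr rfl fun ℓ _ => ?_
  rw [pow_sub_pow_eq_sum, mul_sum]
  exact sum_congr rfl fun s _ => by noncomm_ring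

theorem kronecker_sum_Ico_mulVec_vecM (A G X : Matrix (Fin m) (Fin m) ℝ) (ℓ i : ℕ) :
    (∑ s ∈ Ico ℓ (ℓ + i + 1), (G ^ s)ᵀ ⊗ₖ (A * X ^ (ℓ + i - s))) *ᵥ vecM (G - X) =
      vecM (A * (G ^ (i + 1) - X ^ (i + 1)) * G ^ ℓ) := by
  simp only [sum_mulVec, transpose_kronecker_mulVec_vecM, ← vecM_sum]
  congr 1
  rw [pow_sub_pow_eq_sum, mul_sum, sum_mul, sum_Ico_eq_sum_range,
    show ℓ + i + 1 - ℓ = i + 1 by omega]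
  refine sum_congr rfl fun s _ => ?_
  rw [show ℓ + i - (ℓ + s) = i + 1 - 1 - s by omega, add_comm ℓ s, pow_add]
  noncomm_ring

theorem Pmat_mulVec_vecM (p : ℕ) (Aℓ : ℕ → ℕ → Matrix (Fin m) (Fin m) ℝ)
    (G X : Matrix (Fin m) (Fin m) ℝ)
    (hsG : ∀ ℓ, Summable (fun i => Aℓ ℓ i * G ^ i))
    (hsX : ∀ ℓ, Summable (fun i => Aℓ ℓ i * X ^ i))
    (hsP : ∀ ℓ, Summable (fun i =>
      ∑ s ∈ Ico ℓ (ℓ + i + 1), (G ^ s)ᵀ ⊗ₖ (Aℓ ℓ (i + 1) * X ^ (ℓ + i - s)))) :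
    Pmat p Aℓ G X *ᵥ vecM (G - X) =
      vecM (∑ ℓ ∈ range (p + 1), ((∑' i, Aℓ ℓ i * G ^ i) - ∑' i, Aℓ ℓ i * X ^ i) * G ^ ℓ) := by
  rw [Pmat, sum_mulVec, vecM_sum]
  refine sum_congr rfl fun ℓ _ => ?_
  have hP := (hsP ℓ).hasSum.matrix_mulVec (vecM (G - X))
  have hvec := ((hasSum_mul_pow_succ_sub (hsG ℓ).hasSum (hsX ℓ).hasSum).mul_right (G ^ ℓ)).vecM
  simp only [kronecker_sum_Ico_mulVec_vecM] at hP
  exact hP.unique hvec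

end Vectorisation

theorem stmt16_general (m : ℕ) (p : ℕ)
    (Aℓ : ℕ → ℕ → Matrix (Fin m) (Fin m) ℝ)
    (G Xk Xk1 : Matrix (Fin m) (Fin m) ℝ)
    -- all series occurring converge entrywise:
    (hsG : ∀ ℓ, Summable (fun i => Aℓ ℓ i * G ^ i))
    (hsX : ∀ ℓ, Summable (fun i => Aℓ ℓ i * Xk ^ i))
    (hsP : ∀ ℓ, Summable (fun i =>
      ∑ s ∈ Finset.Ico ℓ (ℓ + i + 1), (G ^ s)ᵀ ⊗ₖ (Aℓ ℓ (i + 1) * Xk ^ (ℓ + i - s))))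
    -- `G = ∑_{ℓ=-1}^q A_ℓ(G) G^{ℓ+1}` :
    (hGeq : G = ∑ ℓ ∈ Finset.range (p + 1), (∑' i, Aℓ ℓ i * G ^ i) * G ^ ℓ)
    -- `X_{k+1} = ∑_{ℓ=-1}^q A_ℓ(X_k) X_{k+1}^{ℓ+1}` :
    (hXeq : Xk1 = ∑ ℓ ∈ Finset.range (p + 1), (∑' i, Aℓ ℓ i * Xk ^ i) * Xk1 ^ ℓ) :
    ((1 : Matrix (Fin m × Fin m) (Fin m × Fin m) ℝ) - Qmat p Aℓ G Xk Xk1) *ᵥ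
        vecM (G - Xk1) =
      Pmat p Aℓ G Xk *ᵥ vecM (G - Xk) := by
  have hdiff : G - Xk1 = ∑ ℓ ∈ range (p + 1),
      ((∑' i, Aℓ ℓ i * G ^ i) * G ^ ℓ - (∑' i, Aℓ ℓ i * Xk ^ i) * Xk1 ^ ℓ) := by
    rw [sum_sub_distrib, ← hGeq, ← hXeq]
  rw [sub_mulVec, one_mulVec, Qmat_mulVec_vecM, Pmat_mulVec_vecM p Aℓ G Xk hsG hsX hsP,
    ← vecM_sub, hdiff, ← sum_sub_distrib]
  congr 1
  exact sum_congr rfl fun ℓ _ => by noncomm_ring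

/-- equation (5.2) of the paper:
`(I - Q(X_k, X_{k+1})) vec(G - X_{k+1}) = P(X_k) vec(G - X_k)`. -/
theorem stmt16 (m : ℕ) (hm : 1 ≤ m) (p : ℕ)
    (Aℓ : ℕ → ℕ → Matrix (Fin m) (Fin m) ℝ)
    (G Xk Xk1 : Matrix (Fin m) (Fin m) ℝ)
    -- all series occurring converge entrywise:
    (hsG : ∀ ℓ, Summable (fun i => Aℓ ℓ i * G ^ i))
    (hsX : ∀ ℓ, Summable (fun i => Aℓ ℓ i * Xk ^ i))
    (hsS : ∀ ℓ, Summable (fun i =>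
      Aℓ ℓ (i + 1) *
        ∑ j ∈ Finset.range (i + 1), Xk ^ j * (G - Xk) * G ^ (i - j + ℓ)))
    (hsP : ∀ ℓ, Summable (fun i =>
      ∑ s ∈ Finset.Ico ℓ (ℓ + i + 1), (G ^ s)ᵀ ⊗ₖ (Aℓ ℓ (i + 1) * Xk ^ (ℓ + i - s))))
    -- `G = ∑_{ℓ=-1}^q A_ℓ(G) G^{ℓ+1}` :
    (hGeq : G = ∑ ℓ ∈ Finset.range (p + 1), (∑' i, Aℓ ℓ i * G ^ i) * G ^ ℓ)
    -- `X_{k+1} = ∑_{ℓ=-1}^q A_ℓ(X_k) X_{k+1}^{ℓ+1}` :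
    (hXeq : Xk1 = ∑ ℓ ∈ Finset.range (p + 1), (∑' i, Aℓ ℓ i * Xk ^ i) * Xk1 ^ ℓ) :
    ((1 : Matrix (Fin m × Fin m) (Fin m × Fin m) ℝ) - Qmat p Aℓ G Xk Xk1) *ᵥ
        vecM (G - Xk1) =
      Pmat p Aℓ G Xk *ᵥ vecM (G - Xk) :=
  stmt16_general m p Aℓ G Xk Xk1 hsG hsX hsP hGeq hXeq
end
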